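/- arXiv:1912.04164 — 2 statements merged into one kernel-verified Lean document; each statement's English description precedes it below -/
import Mathlib

section
/- Fix x ∈ ℝ and a function L satisfying the composition rule, and suppose the following ordering property holds: for every t > 0 and y₁ < y₂, every geodesic from (x,0) to (y₁,t) lies weakly below every geodesic from (x,0) to (y₂,t). Then the set M_x = {y ∈ ℝ : there exist two distinct geodesics from (x,0) to (y,1)} is countable. -/
open Set MeasureTheory

/-- Length of a continuous path `γ` on `[s,t]`: infimum over finite partitions of the
sum of `L`-increments. -/
noncomputable def pathLen (L : ℝ → ℝ → ℝ → ℝ → ℝ) (γ : ℝ → ℝ) (s t : ℝ) : ℝ :=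
  sInf {v : ℝ | ∃ (k : ℕ) (p : ℕ → ℝ), 0 < k ∧ p 0 = s ∧ p k = t ∧
    (∀ i < k, p i < p (i + 1)) ∧
    v = ∑ i ∈ Finset.range k, L (γ (p i)) (p i) (γ (p (i + 1))) (p (i + 1))}

/-- The last-passage composition rule: for every intermediate time `r ∈ (s,t)`,
`L(x,s;y,t)` is the (finite, attained-as-lub) supremum of `L(x,s;z,r)+L(z,r;y,t)`. -/
def CompRule (L : ℝ → ℝ → ℝ → ℝ → ℝ) : Prop :=
  ∀ x s y t r : ℝ, s < r → r < t →
    IsLUB {v : ℝ | ∃ z : ℝ, v = L x s z r + L z r y t} (L x s y t)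

/-- `γ` is a geodesic on `[s,t]`: continuous and of maximal length. -/
def IsGeodesic (L : ℝ → ℝ → ℝ → ℝ → ℝ) (γ : ℝ → ℝ) (s t : ℝ) : Prop :=
  ContinuousOn γ (Icc s t) ∧ pathLen L γ s t = L (γ s) s (γ t) t

/-- `γ` is a geodesic from `(x,s)` to `(y,t)`. -/
def InGt (L : ℝ → ℝ → ℝ → ℝ → ℝ) (x s y t : ℝ) (γ : ℝ → ℝ) : Prop :=
  ContinuousOn γ (Icc s t) ∧ γ s = x ∧ γ t = y ∧ pathLen L γ s t = L x s y t

/-- `γ` is a geodesic from `(x,0)` to `(y,1)`. -/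
def InG (L : ℝ → ℝ → ℝ → ℝ → ℝ) (x y : ℝ) (γ : ℝ → ℝ) : Prop :=
  InGt L x 0 y 1 γ

/-!
If two geodesics from `(x,0)` to `(y,1)` differ, continuity gives a rational time `q` and a
rational level `a` with one geodesic strictly below `a` and the other strictly above it at
time `q`. The pair `(q,a)` determines `y`: were it shared by `y₁ < y₂`, the upper geodesic to
`y₁` would pass above `a` at time `q` while the lower geodesic to `y₂` passes below `a`,
contradicting the ordering. So the exceptional set is covered by countably many subsingletons.
-/

open Filter Topology

lemma exists_rat_btwn_of_continuousAt {f g : ℝ → ℝ} {r : ℝ} {s : Set ℝ}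
    (hf : ContinuousAt f r) (hg : ContinuousAt g r) (hlt : f r < g r) (hs : s ∈ 𝓝 r) :
    ∃ q a : ℚ, (q : ℝ) ∈ s ∧ f q < a ∧ (a : ℝ) < g q := by
  obtain ⟨a, hfa, hag⟩ := exists_rat_btwn hlt
  have hnhds : {t | t ∈ s ∧ f t < a ∧ (a : ℝ) < g t} ∈ 𝓝 r :=
    inter_mem hs ((hf.eventually_lt_const hfa).and (hg.eventually_const_lt hag))
  obtain ⟨_, hq, q, rfl⟩ := mem_closure_iff_nhds.mp (Rat.denseRange_cast (𝕜 := ℝ) r) _ hnhds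
  exact ⟨q, a, hq⟩

namespace InGt

variable {L : ℝ → ℝ → ℝ → ℝ → ℝ} {x s y t : ℝ} {γ γ' : ℝ → ℝ}

lemma mem_Ioo_of_ne (hγ : InGt L x s y t γ) (hγ' : InGt L x s y t γ') {r : ℝ}
    (hr : r ∈ Icc s t) (hne : γ r ≠ γ' r) : r ∈ Ioo s t := by
  refine ⟨hr.1.lt_of_ne ?_, hr.2.lt_of_ne ?_⟩ <;> rintro rfl
  · exact hne (hγ.2.1.trans hγ'.2.1.symm)
  · exact hne (hγ.2.2.1.trans hγ'.2.2.1.symm)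

lemma exists_rat_separation (hγ : InGt L x s y t γ) (hγ' : InGt L x s y t γ') {r : ℝ}
    (hr : r ∈ Icc s t) (hlt : γ r < γ' r) :
    ∃ q a : ℚ, (q : ℝ) ∈ Icc s t ∧ γ q < a ∧ (a : ℝ) < γ' q := by
  have hIcc : Icc s t ∈ 𝓝 r := Icc_mem_nhds_iff.mpr (hγ.mem_Ioo_of_ne hγ' hr hlt.ne)
  exact exists_rat_btwn_of_continuousAt (hγ.1.continuousAt hIcc) (hγ'.1.continuousAt hIcc)
    hlt hIcc

end InGt

lemma subsingleton_endpoints_separated_at {L : ℝ → ℝ → ℝ → ℝ → ℝ} {x s t : ℝ}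
    (hord : ∀ y₁ y₂ : ℝ, y₁ < y₂ → ∀ γ₁ γ₂ : ℝ → ℝ,
      InGt L x s y₁ t γ₁ → InGt L x s y₂ t γ₂ → ∀ r ∈ Icc s t, γ₁ r ≤ γ₂ r)
    (q a : ℝ) :
    {y : ℝ | ∃ γ γ' : ℝ → ℝ, InGt L x s y t γ ∧ InGt L x s y t γ' ∧
      q ∈ Icc s t ∧ γ q < a ∧ a < γ' q}.Subsingleton := by
  rintro y₁ ⟨γ₁, γ₁', h₁, h₁', hq, hlt₁, hgt₁⟩ y₂ ⟨γ₂, γ₂', h₂, h₂', -, hlt₂, hgt₂⟩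
  by_contra hne
  rcases lt_or_gt_of_ne hne with h | h
  · linarith [hord y₁ y₂ h γ₁' γ₂ h₁' h₂ q hq]
  · linarith [hord y₂ y₁ h γ₂' γ₁ h₂' h₁ q hq]

theorem stmt6_general (L : ℝ → ℝ → ℝ → ℝ → ℝ) (x : ℝ)
    (hord : ∀ t : ℝ, 0 < t → ∀ y₁ y₂ : ℝ, y₁ < y₂ → ∀ γ₁ γ₂ : ℝ → ℝ,
      InGt L x 0 y₁ t γ₁ → InGt L x 0 y₂ t γ₂ → ∀ r ∈ Icc (0:ℝ) t, γ₁ r ≤ γ₂ r) :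
    Set.Countable {y : ℝ | ∃ γ γ' : ℝ → ℝ,
      InGt L x 0 y 1 γ ∧ InGt L x 0 y 1 γ' ∧ ∃ r ∈ Icc (0:ℝ) 1, γ r ≠ γ' r} := by
  refine (countable_iUnion fun q : ℚ => countable_iUnion fun a : ℚ =>
    (subsingleton_endpoints_separated_at (hord 1 one_pos) q a).countable).mono ?_
  rintro y ⟨γ, γ', hγ, hγ', r, hr, hne⟩
  simp only [mem_iUnion]
  rcases lt_or_gt_of_ne hne with hlt | hgt
  · obtain ⟨q, a, hq, h₁, h₂⟩ := hγ.exists_rat_separation hγ' hr hlt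
    exact ⟨q, a, γ, γ', hγ, hγ', hq, h₁, h₂⟩
  · obtain ⟨q, a, hq, h₁, h₂⟩ := hγ'.exists_rat_separation hγ hr hgt
    exact ⟨q, a, γ', γ, hγ', hγ, hq, h₁, h₂⟩

theorem stmt6 (L : ℝ → ℝ → ℝ → ℝ → ℝ) (hL : CompRule L) (x : ℝ)
    (hord : ∀ t : ℝ, 0 < t → ∀ y₁ y₂ : ℝ, y₁ < y₂ → ∀ γ₁ γ₂ : ℝ → ℝ,
      InGt L x 0 y₁ t γ₁ → InGt L x 0 y₂ t γ₂ → ∀ r ∈ Icc (0:ℝ) t, γ₁ r ≤ γ₂ r) :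
    Set.Countable {y : ℝ | ∃ γ γ' : ℝ → ℝ,
      InGt L x 0 y 1 γ ∧ InGt L x 0 y 1 γ' ∧ ∃ r ∈ Icc (0:ℝ) 1, γ r ≠ γ' r} :=
  stmt6_general L x hord
end

section
/- Let μ be a Borel measure on ℝ² finite on compacts, x₁ < x₂, and μ_{x₁,x₂}(A) = μ([x₁,x₂] × A). Then the Hausdorff dimension of supp(μ_{x₁,x₂}) (a subset of ℝ) is at most the Hausdorff dimension of supp(μ) (a subset of ℝ²). -/
/-!
Every `y` in the support of the projected measure `A ↦ μ ([x₁, x₂] × A)` is the second coordinate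
of a point of `supp μ`: otherwise the compact segment `[x₁, x₂] × {y}` lies in the open set
`(supp μ)ᶜ`, which is `μ`-null in a second countable space, and by the tube lemma so does a strip
`[x₁, x₂] × V` with `V` a neighbourhood of `y`. The projection `Prod.snd` is `1`-Lipschitz, so it
does not increase Hausdorff dimension.
-/

open Set MeasureTheory Metric Topology

namespace MeasureTheory.Measure

variable {X Y : Type*} [TopologicalSpace X] [TopologicalSpace Y] [MeasurableSpace (X × Y)]
  [HereditarilyLindelofSpace (X × Y)]

theorem exists_prodMk_mem_support_of_measure_prod_ne_zero {μ : Measure (X × Y)} {K : Set X}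
    (hK : IsCompact K) {y : Y} (hy : ∀ V ∈ 𝓝 y, μ (K ×ˢ V) ≠ 0) :
    ∃ x ∈ K, (x, y) ∈ μ.support := by
  by_contra! hKy
  have hsub : K ×ˢ {y} ⊆ μ.supportᶜ := by
    rintro ⟨x, y'⟩ ⟨hx, rfl⟩
    exact hKy x hx
  obtain ⟨U, V, -, hVo, hKU, hyV, hUV⟩ :=
    generalized_tube_lemma hK isCompact_singleton isOpen_compl_support hsub
  exact hy V (hVo.mem_nhds (hyV rfl))
    (measure_mono_null ((Set.prod_mono hKU subset_rfl).trans hUV) measure_compl_support)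

end MeasureTheory.Measure

theorem Metric.measure_support_eq_setOf_measure_ball_ne_zero {X : Type*} [PseudoMetricSpace X]
    [MeasurableSpace X] (μ : Measure X) :
    μ.support = {p : X | ∀ ε : ℝ, 0 < ε → μ (ball p ε) ≠ 0} := by
  ext p
  simp only [nhds_basis_ball.mem_measureSupport, pos_iff_ne_zero, mem_ofPred_eq]

theorem stmt9_general (μ : Measure (ℝ × ℝ))
    (x₁ x₂ : ℝ) :
    dimH {y : ℝ | ∀ ε : ℝ, 0 < ε → μ (Icc x₁ x₂ ×ˢ Metric.ball y ε) ≠ 0}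
      ≤ dimH {p : ℝ × ℝ | ∀ ε : ℝ, 0 < ε → μ (Metric.ball p ε) ≠ 0} := by
  rw [← measure_support_eq_setOf_measure_ball_ne_zero μ]
  have hsub : {y : ℝ | ∀ ε : ℝ, 0 < ε → μ (Icc x₁ x₂ ×ˢ ball y ε) ≠ 0} ⊆
      Prod.snd '' μ.support := by
    intro y hy
    have hstrip : ∀ V ∈ 𝓝 y, μ (Icc x₁ x₂ ×ˢ V) ≠ 0 := fun V hV h ↦ by
      obtain ⟨ε, hε, hεV⟩ := Metric.mem_nhds_iff.1 hV
      exact hy ε hε (measure_mono_null (prod_mono subset_rfl hεV) h)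
    obtain ⟨x, -, hx⟩ :=
      Measure.exists_prodMk_mem_support_of_measure_prod_ne_zero isCompact_Icc hstrip
    exact ⟨(x, y), hx, rfl⟩
  exact (dimH_mono hsub).trans (LipschitzWith.prod_snd.dimH_image_le _)

theorem stmt9 (μ : Measure (ℝ × ℝ)) [IsFiniteMeasureOnCompacts μ]
    (x₁ x₂ : ℝ) (hx : x₁ < x₂) :
    dimH {y : ℝ | ∀ ε : ℝ, 0 < ε → μ (Icc x₁ x₂ ×ˢ Metric.ball y ε) ≠ 0}
      ≤ dimH {p : ℝ × ℝ | ∀ ε : ℝ, 0 < ε → μ (Metric.ball p ε) ≠ 0} :=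
  stmt9_general μ x₁ x₂
end
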